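/- With S_m defined by S₁ = 2¹⁶(3x + 2⁸x²), g₁ = 2¹⁶(3x + 2⁸x²), g₂ = −2²⁴x, and S_m = g₁S_{m−1} − g₂S_{m−2} (with S₀ = 2), the polynomial S_m/2^{1+12m} ∈ ℚ[x] has lowest-degree nonzero term of degree ⌈m/2⌉ and highest-degree term of degree 2m. -/
import Mathlib


open Polynomial

noncomputable def g1 : Polynomial ℤ := 2 ^ 16 * (3 * X + 2 ^ 8 * X ^ 2)

noncomputable def g2 : Polynomial ℤ := -(2 ^ 24) * X

/-- The power sums of the quadratic `x² − g₁x + g₂`: `S₀ = 2`, `S₁ = g₁`,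
`S_{m} = g₁S_{m−1} − g₂S_{m−2}`. -/
noncomputable def S : ℕ → Polynomial ℤ
  | 0 => 2
  | 1 => g1
  | (m + 2) => g1 * S (m + 1) - g2 * S m

lemma g1_eq : g1 = C (3 * 2 ^ 16) * X ^ 1 + C (2 ^ 24) * X ^ 2 := by
  simp [g1]; ring

lemma g2_eq : g2 = C (-(2 ^ 24)) * X ^ 1 := by
  simp [g2]; norm_num

lemma coeff_g1_mul (p : Polynomial ℤ) (k : ℕ) :
    (g1 * p).coeff k = (if 1 ≤ k then 3 * 2 ^ 16 * p.coeff (k - 1) else 0)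
      + (if 2 ≤ k then 2 ^ 24 * p.coeff (k - 2) else 0) := by
  have h : g1 * p = C (3 * 2 ^ 16) * p * X ^ 1 + C (2 ^ 24) * p * X ^ 2 := by
    rw [g1_eq]; ring
  rw [h, coeff_add, coeff_mul_X_pow', coeff_mul_X_pow', coeff_C_mul, coeff_C_mul]

lemma coeff_g2_mul (p : Polynomial ℤ) (k : ℕ) :
    (g2 * p).coeff k = (if 1 ≤ k then -(2 ^ 24) * p.coeff (k - 1) else 0) := by
  have h : g2 * p = C (-(2 ^ 24)) * p * X ^ 1 := by
    rw [g2_eq]; ring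
  rw [h, coeff_mul_X_pow', coeff_C_mul]

lemma S_coeffs (m : ℕ) :
    (∀ k, k < (m + 1) / 2 → (S m).coeff k = 0) ∧
    0 < (S m).coeff ((m + 1) / 2) ∧
    (∀ k, 2 * m < k → (S m).coeff k = 0) ∧
    0 < (S m).coeff (2 * m) := by
  induction m using Nat.strong_induction_on with
  | _ m ih =>
    match m with
    | 0 =>
      have h2 : (2 : Polynomial ℤ) = C 2 := by norm_num
      refine ⟨fun k hk => by omega, ?_, fun k hk => ?_, ?_⟩
      · show (0:ℤ) < (S 0).coeff 0
        rw [show S 0 = C 2 from h2, coeff_C]; norm_num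
      · show (S 0).coeff k = 0
        rw [show S 0 = C 2 from h2, coeff_C, if_neg (by omega)]
      · show (0:ℤ) < (S 0).coeff 0
        rw [show S 0 = C 2 from h2, coeff_C]; norm_num
    | 1 =>
      have hS : S 1 = g1 := rfl
      refine ⟨fun k hk => ?_, ?_, fun k hk => ?_, ?_⟩
      · rw [hS, g1_eq]
        have hk0 : k = 0 := by omega
        subst hk0
        simp [coeff_X_pow]
      · rw [hS, g1_eq]
        simp [coeff_X_pow]
      · rw [hS, g1_eq]
        simp only [coeff_add, coeff_C_mul, coeff_X_pow]
        rw [if_neg (by omega), if_neg (by omega)]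
        ring
      · rw [hS, g1_eq]
        simp only [coeff_add, coeff_C_mul, coeff_X_pow]
        norm_num
    | (m + 2) =>
      obtain ⟨h1, h2, h3, h4⟩ := ih m (by omega)
      obtain ⟨j1, j2, j3, j4⟩ := ih (m + 1) (by omega)
      have hS : S (m + 2) = g1 * S (m + 1) - g2 * S m := rfl
      refine ⟨fun k hk => ?_, ?_, fun k hk => ?_, ?_⟩
      · -- lower zeros : k < (m+3)/2
        rw [hS, coeff_sub, coeff_g1_mul, coeff_g2_mul]
        by_cases hk1 : 1 ≤ k
        · have e1 : (S (m + 1)).coeff (k - 1) = 0 := j1 _ (by omega)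
          have e2 : (S m).coeff (k - 1) = 0 := h1 _ (by omega)
          have e3 : (S (m + 1)).coeff (k - 2) = 0 := j1 _ (by omega)
          simp [e1, e2, e3]
        · simp [hk1, show ¬ (2 ≤ k) by omega]
      · -- trailing coefficient positive at t = (m+3)/2
        set t := (m + 2 + 1) / 2 with ht
        have ht1 : 1 ≤ t := by omega
        rw [hS, coeff_sub, coeff_g1_mul, coeff_g2_mul, if_pos ht1, if_pos ht1]
        have hc2 : (if 2 ≤ t then 2 ^ 24 * (S (m + 1)).coeff (t - 2) else 0) = 0 := by
          split_ifs with h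
          · rw [j1 (t - 2) (by omega), mul_zero]
          · rfl
        have hge : 0 ≤ (S (m + 1)).coeff (t - 1) := by
          rcases lt_or_ge (t - 1) ((m + 1 + 1) / 2) with h | h
          · rw [j1 _ h]
          · rw [show t - 1 = (m + 1 + 1) / 2 by omega]
            exact le_of_lt j2
        have hpos : 0 < (S m).coeff (t - 1) := by
          rw [show t - 1 = (m + 1) / 2 by omega]; exact h2
        rw [hc2, add_zero]
        nlinarith [hge, hpos]
      · -- upper zeros : k > 2(m+2)
        rw [hS, coeff_sub, coeff_g1_mul, coeff_g2_mul,
          if_pos (show 1 ≤ k by omega), if_pos (show 1 ≤ k by omega),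
          if_pos (show 2 ≤ k by omega)]
        rw [j3 (k - 1) (by omega), j3 (k - 2) (by omega), h3 (k - 1) (by omega)]
        ring
      · -- leading coefficient positive at 2(m+2)
        rw [hS, coeff_sub, coeff_g1_mul, coeff_g2_mul,
          if_pos (show 1 ≤ 2 * (m + 2) by omega), if_pos (show 1 ≤ 2 * (m + 2) by omega),
          if_pos (show 2 ≤ 2 * (m + 2) by omega)]
        rw [j3 (2 * (m + 2) - 1) (by omega), h3 (2 * (m + 2) - 1) (by omega),
          show 2 * (m + 2) - 2 = 2 * (m + 1) by omega]
        nlinarith [j4]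

/-- `S_m / 2^{1+12m} ∈ ℚ[x]` has lowest-degree nonzero term of degree `⌈m/2⌉`
and highest-degree term of degree `2m`. -/
theorem S_div_degrees (m : ℕ) (hm : 1 ≤ m) :
    (Polynomial.C ((1 : ℚ) / 2 ^ (1 + 12 * m)) * (S m).map (Int.castRingHom ℚ)) ≠ 0 ∧
    (Polynomial.C ((1 : ℚ) / 2 ^ (1 + 12 * m)) * (S m).map (Int.castRingHom ℚ)).natDegree
      = 2 * m ∧
    (Polynomial.C ((1 : ℚ) / 2 ^ (1 + 12 * m)) *
        (S m).map (Int.castRingHom ℚ)).natTrailingDegree = (m + 1) / 2 := by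
  obtain ⟨h1, h2, h3, h4⟩ := S_coeffs m
  set c : ℚ := (1 : ℚ) / 2 ^ (1 + 12 * m) with hc
  have hc0 : c ≠ 0 := by positivity
  set p : Polynomial ℚ := C c * (S m).map (Int.castRingHom ℚ) with hp
  have hcoeff : ∀ k, p.coeff k = c * ((S m).coeff k : ℚ) := by
    intro k
    rw [hp, coeff_C_mul, coeff_map]
    rfl
  have hzero : ∀ k, (S m).coeff k = 0 → p.coeff k = 0 := by
    intro k hk; rw [hcoeff, hk]; simp
  have hne : ∀ k, (S m).coeff k ≠ 0 → p.coeff k ≠ 0 := by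
    intro k hk
    rw [hcoeff]
    exact mul_ne_zero hc0 (Int.cast_ne_zero.mpr hk)
  have hp0 : p ≠ 0 := by
    intro h
    exact hne (2 * m) (ne_of_gt h4) (by rw [h, coeff_zero])
  refine ⟨hp0, ?_, ?_⟩
  · apply le_antisymm
    · apply Polynomial.natDegree_le_iff_coeff_eq_zero.mpr
      intro N hN
      exact hzero N (h3 N hN)
    · exact le_natDegree_of_ne_zero (hne (2 * m) (ne_of_gt h4))
  · apply le_antisymm
    · exact natTrailingDegree_le_of_ne_zero (hne ((m + 1) / 2) (ne_of_gt h2))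
    · exact le_natTrailingDegree hp0 (fun i hi => hzero i (h1 i hi))
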